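/- arXiv:1706.04266 — 7 statements merged into one kernel-verified Lean document; each statement's English description precedes it below -/
import Mathlib

section
/- Let θ' be the smallest attained similarity value strictly greater than θ (so join(θ) \ join(θ') = join⁼(θ)). If for every pair (r,s) ∈ join⁼(θ) we have r ∉ top^R(s) or s ∉ top^S(r), then the number of non-trivial connected components of the bipartite graph G_θ = (R, S, join(θ)) is at most the number of non-trivial connected components of G_{θ'}; i.e., h_c(θ') ≥ h_c(θ). -/
open scoped Classical

noncomputable def simJoin {α β : Type*} (R : Finset α) (S : Finset β)
    (sim : α → β → ℝ) (θ : ℝ) : Finset (α × β) :=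
  (R ×ˢ S).filter fun p => θ ≤ sim p.1 p.2

noncomputable def simJoinEq {α β : Type*} (R : Finset α) (S : Finset β)
    (sim : α → β → ℝ) (θ : ℝ) : Finset (α × β) :=
  (R ×ˢ S).filter fun p => sim p.1 p.2 = θ

noncomputable def topS {α β : Type*} (S : Finset β) (sim : α → β → ℝ) (r : α) : Finset β :=
  S.filter fun s => ∀ s' ∈ S, sim r s' ≤ sim r s

noncomputable def topR {α β : Type*} (R : Finset α) (sim : α → β → ℝ) (s : β) : Finset α :=
  R.filter fun r => ∀ r' ∈ R, sim r' s ≤ sim r s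

/-- The bipartite graph `G_θ` on vertex set `α ⊕ β` whose edges are the joined pairs. -/
def biGraph {α β : Type*} (R : Finset α) (S : Finset β)
    (sim : α → β → ℝ) (θ : ℝ) : SimpleGraph (α ⊕ β) :=
  SimpleGraph.fromRel fun x y =>
    ∃ r ∈ R, ∃ s ∈ S, θ ≤ sim r s ∧ x = Sum.inl r ∧ y = Sum.inr s

/-- `h_c(θ)`: the number of non-trivial connected components of `G_θ`,
i.e. components containing at least one edge. -/
noncomputable def hc {α β : Type*} (R : Finset α) (S : Finset β)
    (sim : α → β → ℝ) (θ : ℝ) : ℕ :=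
  {c : (biGraph R S sim θ).ConnectedComponent |
    ∃ r ∈ R, ∃ s ∈ S, θ ≤ sim r s ∧
      (biGraph R S sim θ).connectedComponentMk (Sum.inl r) = c}.ncard

/-!
Raising the threshold from `θ` to `θ'` only deletes the edges of weight exactly `θ`, so `G_θ'` is a
subgraph of `G_θ` and every component of `G_θ'` lies inside a component of `G_θ`. It therefore
suffices that every non-trivial component of `G_θ` contains an edge of `G_θ'`: an edge `(r, s)` of
weight `θ` is not mutually top, so `r` or `s` has a partner of similarity `> θ`, hence `≥ θ'`.
-/

open SimpleGraph

section

variable {α β : Type*} {R : Finset α} {S : Finset β} {sim : α → β → ℝ}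

theorem biGraph_adj_inl_inr {θ : ℝ} {r : α} {s : β} (hr : r ∈ R) (hs : s ∈ S)
    (hθ : θ ≤ sim r s) : (biGraph R S sim θ).Adj (Sum.inl r) (Sum.inr s) := by
  simp only [biGraph, fromRel_adj]
  exact ⟨Sum.inl_ne_inr, Or.inl ⟨r, hr, s, hs, hθ, rfl, rfl⟩⟩

theorem biGraph_anti {θ θ' : ℝ} (h : θ ≤ θ') : biGraph R S sim θ' ≤ biGraph R S sim θ := by
  intro x y hxy
  simp only [biGraph, fromRel_adj] at hxy ⊢
  obtain ⟨hne, hrel⟩ := hxy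
  refine ⟨hne, hrel.imp ?_ ?_⟩ <;>
    exact fun ⟨r, hr, s, hs, hθ', hxy⟩ => ⟨r, hr, s, hs, h.trans hθ', hxy⟩

theorem exists_lt_sim_of_notMem_topR {r : α} {s : β} (hr : r ∈ R) (h : r ∉ topR R sim s) :
    ∃ r' ∈ R, sim r s < sim r' s := by
  simpa [topR, hr] using h

theorem exists_lt_sim_of_notMem_topS {r : α} {s : β} (hs : s ∈ S) (h : s ∉ topS S sim r) :
    ∃ s' ∈ S, sim r s < sim r s' := by
  simpa [topS, hs] using h

theorem exists_reachable_of_no_mutual_top {θ θ' : ℝ}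
    (hnext : ∀ r ∈ R, ∀ s ∈ S, θ ≤ sim r s → sim r s = θ ∨ θ' ≤ sim r s)
    (htop : ∀ r ∈ R, ∀ s ∈ S, sim r s = θ → r ∉ topR R sim s ∨ s ∉ topS S sim r)
    {r : α} {s : β} (hr : r ∈ R) (hs : s ∈ S) (hθ : θ ≤ sim r s) :
    ∃ r₀ ∈ R, ∃ s₀ ∈ S, θ' ≤ sim r₀ s₀ ∧
      (biGraph R S sim θ).Reachable (Sum.inl r₀) (Sum.inl r) := by
  rcases hnext r hr s hs hθ with heq | hge
  · have hstrong : ∀ r' ∈ R, ∀ s' ∈ S, sim r s < sim r' s' → θ' ≤ sim r' s' := by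
      intro r' hr' s' hs' hlt
      rw [heq] at hlt
      exact (hnext r' hr' s' hs' hlt.le).resolve_left hlt.ne'
    rcases htop r hr s hs heq with hnot | hnot
    · obtain ⟨r', hr', hlt⟩ := exists_lt_sim_of_notMem_topR hr hnot
      refine ⟨r', hr', s, hs, hstrong r' hr' s hs hlt, ?_⟩
      exact (biGraph_adj_inl_inr hr' hs (hθ.trans hlt.le)).reachable.trans
        (biGraph_adj_inl_inr hr hs hθ).reachable.symm
    · obtain ⟨s', hs', hlt⟩ := exists_lt_sim_of_notMem_topS hs hnot
      exact ⟨r, hr, s', hs', hstrong r hr s' hs' hlt, Reachable.refl _⟩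
  · exact ⟨r, hr, s, hs, hge, Reachable.refl _⟩

variable (R S sim)

def nontrivialComponents (θ : ℝ) : Set (biGraph R S sim θ).ConnectedComponent :=
  {c | ∃ r ∈ R, ∃ s ∈ S, θ ≤ sim r s ∧ (biGraph R S sim θ).connectedComponentMk (Sum.inl r) = c}

theorem hc_eq_ncard_nontrivialComponents (θ : ℝ) :
    hc R S sim θ = (nontrivialComponents R S sim θ).ncard :=
  rfl

theorem nontrivialComponents_finite (θ : ℝ) : (nontrivialComponents R S sim θ).Finite := by
  refine (R.finite_toSet.image fun r =>
    (biGraph R S sim θ).connectedComponentMk (Sum.inl r)).subset ?_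
  rintro c ⟨r, hr, -, -, -, rfl⟩
  exact ⟨r, hr, rfl⟩

theorem nontrivialComponents_subset_image_map {θ θ' : ℝ} (hle : θ ≤ θ')
    (hnext : ∀ r ∈ R, ∀ s ∈ S, θ ≤ sim r s → sim r s = θ ∨ θ' ≤ sim r s)
    (htop : ∀ r ∈ R, ∀ s ∈ S, sim r s = θ → r ∉ topR R sim s ∨ s ∉ topS S sim r) :
    nontrivialComponents R S sim θ ⊆
      ConnectedComponent.map (Hom.ofLE (biGraph_anti hle)) '' nontrivialComponents R S sim θ' := by
  rintro c ⟨r, hr, s, hs, hθ, rfl⟩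
  obtain ⟨r₀, hr₀, s₀, hs₀, hθ', hreach⟩ := exists_reachable_of_no_mutual_top hnext htop hr hs hθ
  exact ⟨_, ⟨r₀, hr₀, s₀, hs₀, hθ', rfl⟩, ConnectedComponent.sound hreach⟩

end

theorem maxgroups_pivotal {α β : Type*} (R : Finset α) (S : Finset β)
    (sim : α → β → ℝ) (θ θ' : ℝ) (hlt : θ < θ')
    (hnext : ∀ r ∈ R, ∀ s ∈ S, θ ≤ sim r s → sim r s = θ ∨ θ' ≤ sim r s)
    (htop : ∀ r ∈ R, ∀ s ∈ S, sim r s = θ →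
      r ∉ topR R sim s ∨ s ∉ topS S sim r) :
    hc R S sim θ ≤ hc R S sim θ' := by
  rw [hc_eq_ncard_nontrivialComponents, hc_eq_ncard_nontrivialComponents]
  have hfin := nontrivialComponents_finite R S sim θ'
  calc (nontrivialComponents R S sim θ).ncard
      ≤ (ConnectedComponent.map (Hom.ofLE (biGraph_anti hlt.le)) ''
          nontrivialComponents R S sim θ').ncard :=
        Set.ncard_le_ncard (nontrivialComponents_subset_image_map R S sim hlt.le hnext htop)
          (hfin.image _)
    _ ≤ (nontrivialComponents R S sim θ').ncard := Set.ncard_image_le hfin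
end

section
/- Let θ' be the smallest attained similarity value strictly greater than θ (so join(θ) \ join(θ') = join⁼(θ)). If for every pair (r,s) ∈ join⁼(θ) we have r ∉ top^R(s) or s ∉ top^S(r), then h_o(θ') ≥ h_o(θ), where h_o(θ) = |cover^R(θ)| + |cover^S(θ)| − |join(θ)|. -/
open scoped Classical

noncomputable def coverR {α β : Type*} (R : Finset α) (S : Finset β)
    (sim : α → β → ℝ) (θ : ℝ) : Finset α :=
  R.filter fun r => ∃ s ∈ S, θ ≤ sim r s

noncomputable def coverS {α β : Type*} (R : Finset α) (S : Finset β)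
    (sim : α → β → ℝ) (θ : ℝ) : Finset β :=
  S.filter fun s => ∃ r ∈ R, θ ≤ sim r s

/-- `h_o(θ) = |cover^R(θ)| + |cover^S(θ)| − |join(θ)|`. -/
noncomputable def ho {α β : Type*} (R : Finset α) (S : Finset β)
    (sim : α → β → ℝ) (θ : ℝ) : ℤ :=
  (coverR R S sim θ).card + (coverS R S sim θ).card - (simJoin R S sim θ).card

theorem minoutjoin_pivotal {α β : Type*} (R : Finset α) (S : Finset β)
    (sim : α → β → ℝ) (θ θ' : ℝ) (hlt : θ < θ')
    (hnext : ∀ r ∈ R, ∀ s ∈ S, θ ≤ sim r s → sim r s = θ ∨ θ' ≤ sim r s)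
    (htop : ∀ r ∈ R, ∀ s ∈ S, sim r s = θ →
      r ∉ topR R sim s ∨ s ∉ topS S sim r) :
    ho R S sim θ ≤ ho R S sim θ' := by
  classical
  have hle : θ ≤ θ' := le_of_lt hlt
  have hRsub : coverR R S sim θ' ⊆ coverR R S sim θ := by
    intro r hr
    simp only [coverR, Finset.mem_filter] at hr ⊢
    obtain ⟨hrR, s, hs, h⟩ := hr
    exact ⟨hrR, s, hs, le_trans hle h⟩
  have hSsub : coverS R S sim θ' ⊆ coverS R S sim θ := by
    intro s hs
    simp only [coverS, Finset.mem_filter] at hs ⊢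
    obtain ⟨hsS, r, hr, h⟩ := hs
    exact ⟨hsS, r, hr, le_trans hle h⟩
  have hJsub : simJoin R S sim θ' ⊆ simJoin R S sim θ := by
    intro p hp
    simp only [simJoin, Finset.mem_filter] at hp ⊢
    exact ⟨hp.1, le_trans hle hp.2⟩
  set A := coverR R S sim θ \ coverR R S sim θ' with hAdef
  set B := coverS R S sim θ \ coverS R S sim θ' with hBdef
  set J := simJoin R S sim θ \ simJoin R S sim θ' with hJdef
  -- properties of members of A and B
  have hAprop : ∀ r ∈ A, r ∈ R ∧ (∃ s, s ∈ S ∧ sim r s = θ) ∧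
      ∀ s ∈ S, ¬ θ' ≤ sim r s := by
    intro r hr
    rw [hAdef, Finset.mem_sdiff] at hr
    obtain ⟨h1, h2⟩ := hr
    simp only [coverR, Finset.mem_filter] at h1 h2
    obtain ⟨hrR, s, hsS, hge⟩ := h1
    have hno : ∀ s ∈ S, ¬ θ' ≤ sim r s := by
      intro s' hs' hge'
      exact h2 ⟨hrR, s', hs', hge'⟩
    refine ⟨hrR, ⟨s, hsS, ?_⟩, hno⟩
    rcases hnext r hrR s hsS hge with h | h
    · exact h
    · exact absurd h (hno s hsS)
  have hBprop : ∀ s ∈ B, s ∈ S ∧ (∃ r, r ∈ R ∧ sim r s = θ) ∧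
      ∀ r ∈ R, ¬ θ' ≤ sim r s := by
    intro s hs
    rw [hBdef, Finset.mem_sdiff] at hs
    obtain ⟨h1, h2⟩ := hs
    simp only [coverS, Finset.mem_filter] at h1 h2
    obtain ⟨hsS, r, hrR, hge⟩ := h1
    have hno : ∀ r ∈ R, ¬ θ' ≤ sim r s := by
      intro r' hr' hge'
      exact h2 ⟨hsS, r', hr', hge'⟩
    refine ⟨hsS, ⟨r, hrR, ?_⟩, hno⟩
    rcases hnext r hrR s hsS hge with h | h
    · exact h
    · exact absurd h (hno r hrR)
  -- no pair (r,s) with r ∈ A, s ∈ B, sim r s = θ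
  have hnopair : ∀ r ∈ A, ∀ s ∈ B, sim r s ≠ θ := by
    intro r hr s hs heq
    obtain ⟨hrR, -, hnoR⟩ := hAprop r hr
    obtain ⟨hsS, -, hnoS⟩ := hBprop s hs
    rcases htop r hrR s hsS heq with h | h
    · simp only [topR, Finset.mem_filter, not_and] at h
      push_neg at h
      obtain ⟨r', hr', hgt⟩ := h hrR
      have hθ : θ ≤ sim r' s := le_of_lt (heq ▸ hgt)
      rcases hnext r' hr' s hsS hθ with h' | h'
      · rw [h', ← heq] at hgt; exact lt_irrefl _ hgt
      · exact hnoS r' hr' h'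
    · simp only [topS, Finset.mem_filter, not_and] at h
      push_neg at h
      obtain ⟨s', hs', hgt⟩ := h hsS
      have hθ : θ ≤ sim r s' := le_of_lt (heq ▸ hgt)
      rcases hnext r hrR s' hs' hθ with h' | h'
      · rw [h', ← heq] at hgt; exact lt_irrefl _ hgt
      · exact hnoR s' hs' h'
  -- build injections into J
  have key : A.card + B.card ≤ J.card := by
    let fA : {x // x ∈ A} → α × β :=
      fun x => (x.1, ((hAprop x.1 x.2).2.1).choose)
    let fB : {x // x ∈ B} → α × β :=
      fun x => (((hBprop x.1 x.2).2.1).choose, x.1)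
    have hfAspec : ∀ x : {x // x ∈ A},
        (fA x).2 ∈ S ∧ sim x.1 (fA x).2 = θ := fun x =>
      ((hAprop x.1 x.2).2.1).choose_spec
    have hfBspec : ∀ x : {x // x ∈ B},
        (fB x).1 ∈ R ∧ sim (fB x).1 x.1 = θ := fun x =>
      ((hBprop x.1 x.2).2.1).choose_spec
    have hfAJ : ∀ x : {x // x ∈ A}, fA x ∈ J := by
      intro x
      obtain ⟨hrR, -, hno⟩ := hAprop x.1 x.2
      obtain ⟨hsS, heq⟩ := hfAspec x
      rw [hJdef, Finset.mem_sdiff]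
      constructor
      · simp only [simJoin, Finset.mem_filter, Finset.mem_product]
        exact ⟨⟨hrR, hsS⟩, le_of_eq heq.symm⟩
      · simp only [simJoin, Finset.mem_filter, Finset.mem_product, not_and]
        intro _
        exact hno _ hsS
    have hfBJ : ∀ x : {x // x ∈ B}, fB x ∈ J := by
      intro x
      obtain ⟨hsS, -, hno⟩ := hBprop x.1 x.2
      obtain ⟨hrR, heq⟩ := hfBspec x
      rw [hJdef, Finset.mem_sdiff]
      constructor
      · simp only [simJoin, Finset.mem_filter, Finset.mem_product]
        exact ⟨⟨hrR, hsS⟩, le_of_eq heq.symm⟩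
      · simp only [simJoin, Finset.mem_filter, Finset.mem_product, not_and]
        intro _
        exact hno _ hrR
    have hIA : (A.attach.image fA).card = A.card := by
      rw [Finset.card_image_of_injective _ ?_, Finset.card_attach]
      intro x y hxy
      have : x.1 = y.1 := congrArg Prod.fst hxy
      exact Subtype.ext this
    have hIB : (B.attach.image fB).card = B.card := by
      rw [Finset.card_image_of_injective _ ?_, Finset.card_attach]
      intro x y hxy
      have : x.1 = y.1 := congrArg Prod.snd hxy
      exact Subtype.ext this
    have hdisj : Disjoint (A.attach.image fA) (B.attach.image fB) := by
      rw [Finset.disjoint_left]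
      intro p hpA hpB
      simp only [Finset.mem_image, Finset.mem_attach, true_and] at hpA hpB
      obtain ⟨x, hx⟩ := hpA
      obtain ⟨y, hy⟩ := hpB
      have hp1 : p.1 ∈ A := by rw [← hx]; exact x.2
      have hp2 : p.2 ∈ B := by rw [← hy]; exact y.2
      have heq : sim p.1 p.2 = θ := by
        have hspec := (hfAspec x).2
        have e1 : p.1 = x.1 := by rw [← hx]
        have e2 : p.2 = (fA x).2 := by rw [hx]
        rw [e1, e2]
        exact hspec
      exact hnopair p.1 hp1 p.2 hp2 heq
    have hunion : (A.attach.image fA) ∪ (B.attach.image fB) ⊆ J := by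
      apply Finset.union_subset
      · intro p hp
        simp only [Finset.mem_image] at hp
        obtain ⟨x, -, hx⟩ := hp
        exact hx ▸ hfAJ x
      · intro p hp
        simp only [Finset.mem_image] at hp
        obtain ⟨x, -, hx⟩ := hp
        exact hx ▸ hfBJ x
    calc A.card + B.card
        = (A.attach.image fA).card + (B.attach.image fB).card := by rw [hIA, hIB]
      _ = ((A.attach.image fA) ∪ (B.attach.image fB)).card :=
          (Finset.card_union_of_disjoint hdisj).symm
      _ ≤ J.card := Finset.card_le_card hunion
  -- card arithmetic
  have h1 : A.card + (coverR R S sim θ').card = (coverR R S sim θ).card :=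
    Finset.card_sdiff_add_card_eq_card hRsub
  have h2 : B.card + (coverS R S sim θ').card = (coverS R S sim θ).card :=
    Finset.card_sdiff_add_card_eq_card hSsub
  have h3 : J.card + (simJoin R S sim θ').card = (simJoin R S sim θ).card :=
    Finset.card_sdiff_add_card_eq_card hJsub
  unfold ho
  omega
end

section
/- For any threshold θ'' < θ, the number of non-trivial connected components of G_{θ''} satisfies h_c(θ'') ≤ h_c(θ) + min{|R \ cover^R(θ)|, |S \ cover^S(θ)|}. -/
open scoped Classical

section aux
variable {α β : Type*} (R : Finset α) (S : Finset β) (sim : α → β → ℝ)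

lemma biGraph_mono {θ θ'' : ℝ} (h : θ'' ≤ θ) :
    biGraph R S sim θ ≤ biGraph R S sim θ'' := by
  intro x y hxy
  simp only [biGraph, SimpleGraph.fromRel_adj] at hxy ⊢
  obtain ⟨hne, hrel⟩ := hxy
  refine ⟨hne, ?_⟩
  rcases hrel with ⟨r, hr, s, hs, hsim, hx, hy⟩ | ⟨r, hr, s, hs, hsim, hx, hy⟩
  · exact Or.inl ⟨r, hr, s, hs, h.trans hsim, hx, hy⟩
  · exact Or.inr ⟨r, hr, s, hs, h.trans hsim, hx, hy⟩

lemma mk_mono {V : Type*} {G G' : SimpleGraph V} (hle : G ≤ G') {x y : V}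
    (hxy : G.connectedComponentMk x = G.connectedComponentMk y) :
    G'.connectedComponentMk x = G'.connectedComponentMk y := by
  rw [SimpleGraph.ConnectedComponent.eq] at hxy ⊢
  exact hxy.mono hle

lemma mk_eq_of_edge {θ : ℝ} {r : α} {s : β} (hr : r ∈ R) (hs : s ∈ S)
    (hsim : θ ≤ sim r s) :
    (biGraph R S sim θ).connectedComponentMk (Sum.inl r)
      = (biGraph R S sim θ).connectedComponentMk (Sum.inr s) := by
  rw [SimpleGraph.ConnectedComponent.eq]
  refine SimpleGraph.Adj.reachable ?_
  simp only [biGraph, SimpleGraph.fromRel_adj]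
  exact ⟨by simp, Or.inl ⟨r, hr, s, hs, hsim, rfl, rfl⟩⟩

lemma ntset_finite (θ : ℝ) :
    {c : (biGraph R S sim θ).ConnectedComponent |
      ∃ r ∈ R, ∃ s ∈ S, θ ≤ sim r s ∧
        (biGraph R S sim θ).connectedComponentMk (Sum.inl r) = c}.Finite := by
  apply Set.Finite.subset (R.finite_toSet.image
    (fun r => (biGraph R S sim θ).connectedComponentMk (Sum.inl r)))
  rintro c ⟨r, hr, s, hs, hsim, hmk⟩
  exact ⟨r, hr, hmk⟩


lemma hc_bound_R {θ θ'' : ℝ} (h : θ'' ≤ θ) :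
    hc R S sim θ'' ≤ hc R S sim θ + (R \ coverR R S sim θ).card := by
  classical
  set G := biGraph R S sim θ'' with hG
  set G' := biGraph R S sim θ with hG'
  set A : Set G.ConnectedComponent :=
    {c | ∃ r ∈ R, ∃ s ∈ S, θ'' ≤ sim r s ∧ G.connectedComponentMk (Sum.inl r) = c} with hAdef
  set B : Set G'.ConnectedComponent :=
    {c | ∃ r ∈ R, ∃ s ∈ S, θ ≤ sim r s ∧ G'.connectedComponentMk (Sum.inl r) = c} with hBdef
  have hhc'' : hc R S sim θ'' = A.ncard := rfl
  have hhc : hc R S sim θ = B.ncard := rfl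
  rw [hhc'', hhc]
  rcases Set.eq_empty_or_nonempty A with hAe | ⟨c0, r0, hr0, -⟩
  · simp [hAe]
  haveI : Nonempty α := ⟨r0⟩
  set P : G.ConnectedComponent → Prop :=
    fun c => ∃ r', r' ∈ coverR R S sim θ ∧ G.connectedComponentMk (Sum.inl r') = c with hP
  set A1 : Set G.ConnectedComponent := {c ∈ A | P c} with hA1
  have hA1sub : A1 ⊆ A := fun c hc => hc.1
  have hsplit : A = A1 ∪ (A \ A1) := (Set.union_diff_cancel hA1sub).symm
  have hle1 : A.ncard ≤ A1.ncard + (A \ A1).ncard := by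
    have := Set.ncard_union_le A1 (A \ A1); rwa [← hsplit] at this
  -- A1 injects into B
  have hB1 : A1.ncard ≤ B.ncard := by
    set f : G.ConnectedComponent → G'.ConnectedComponent :=
      fun c => if hq : P c then G'.connectedComponentMk (Sum.inl hq.choose)
        else G'.connectedComponentMk (Sum.inl (Classical.arbitrary α)) with hf
    apply Set.ncard_le_ncard_of_injOn f ?_ ?_ (ntset_finite R S sim θ)
    · rintro c ⟨-, hq⟩
      have hspec := hq.choose_spec
      rw [hf]; simp only [dif_pos hq]
      obtain ⟨hrR, s, hsS, hsim⟩ := Finset.mem_filter.mp hspec.1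
      exact ⟨hq.choose, hrR, s, hsS, hsim, rfl⟩
    · rintro c1 ⟨-, hq1⟩ c2 ⟨-, hq2⟩ hfe
      rw [hf] at hfe; simp only [dif_pos hq1, dif_pos hq2] at hfe
      have h1 := hq1.choose_spec.2
      have h2 := hq2.choose_spec.2
      rw [← h1, ← h2]
      exact mk_mono (biGraph_mono R S sim h) hfe
  -- A \ A1 injects into R \ coverR
  have hB2 : (A \ A1).ncard ≤ (R \ coverR R S sim θ).card := by
    set g : G.ConnectedComponent → α :=
      fun c => if hq : ∃ r, r ∈ R ∧ ∃ s ∈ S, θ'' ≤ sim r s ∧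
          G.connectedComponentMk (Sum.inl r) = c then hq.choose
        else Classical.arbitrary α with hg
    rw [← Set.ncard_coe_finset]
    apply Set.ncard_le_ncard_of_injOn g ?_ ?_ (Finset.finite_toSet _)
    · rintro c ⟨hcA, hcn⟩
      have hq : ∃ r, r ∈ R ∧ ∃ s ∈ S, θ'' ≤ sim r s ∧
          G.connectedComponentMk (Sum.inl r) = c := hcA
      have hspec := hq.choose_spec
      rw [hg]; simp only [dif_pos hq]
      obtain ⟨hrR, s, hsS, hsim, hmk⟩ := hspec
      simp only [Finset.coe_sdiff, Set.mem_diff, Finset.mem_coe]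
      refine ⟨hrR, fun hcov => hcn ⟨hcA, ⟨hq.choose, hcov, hmk⟩⟩⟩
    · rintro c1 ⟨hc1, -⟩ c2 ⟨hc2, -⟩ hge
      have hq1 : ∃ r, r ∈ R ∧ ∃ s ∈ S, θ'' ≤ sim r s ∧
          G.connectedComponentMk (Sum.inl r) = c1 := hc1
      have hq2 : ∃ r, r ∈ R ∧ ∃ s ∈ S, θ'' ≤ sim r s ∧
          G.connectedComponentMk (Sum.inl r) = c2 := hc2
      rw [hg] at hge; simp only [dif_pos hq1, dif_pos hq2] at hge
      have h1 := hq1.choose_spec.2.choose_spec.2.2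
      have h2 := hq2.choose_spec.2.choose_spec.2.2
      rw [← h1, ← h2, hge]
  omega

lemma hc_bound_S {θ θ'' : ℝ} (h : θ'' ≤ θ) :
    hc R S sim θ'' ≤ hc R S sim θ + (S \ coverS R S sim θ).card := by
  classical
  set G := biGraph R S sim θ'' with hG
  set G' := biGraph R S sim θ with hG'
  set A : Set G.ConnectedComponent :=
    {c | ∃ r ∈ R, ∃ s ∈ S, θ'' ≤ sim r s ∧ G.connectedComponentMk (Sum.inl r) = c} with hAdef
  set B : Set G'.ConnectedComponent :=
    {c | ∃ r ∈ R, ∃ s ∈ S, θ ≤ sim r s ∧ G'.connectedComponentMk (Sum.inl r) = c} with hBdef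
  have hhc'' : hc R S sim θ'' = A.ncard := rfl
  have hhc : hc R S sim θ = B.ncard := rfl
  rw [hhc'', hhc]
  rcases Set.eq_empty_or_nonempty A with hAe | ⟨c0, r0, hr0, s0, hs0, -⟩
  · simp [hAe]
  haveI : Nonempty β := ⟨s0⟩
  -- Q c : c contains a θ-edge touching it via an S-vertex
  set Q : G.ConnectedComponent → Prop :=
    fun c => ∃ r, r ∈ R ∧ ∃ s, s ∈ S ∧ θ ≤ sim r s ∧
      G.connectedComponentMk (Sum.inr s) = c with hQ
  set A1 : Set G.ConnectedComponent := {c ∈ A | Q c} with hA1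
  have hA1sub : A1 ⊆ A := fun c hc => hc.1
  have hsplit : A = A1 ∪ (A \ A1) := (Set.union_diff_cancel hA1sub).symm
  have hle1 : A.ncard ≤ A1.ncard + (A \ A1).ncard := by
    have := Set.ncard_union_le A1 (A \ A1); rwa [← hsplit] at this
  have hB1 : A1.ncard ≤ B.ncard := by
    set f : G.ConnectedComponent → G'.ConnectedComponent :=
      fun c => if hq : Q c then G'.connectedComponentMk (Sum.inl hq.choose)
        else G'.connectedComponentMk (Sum.inr (Classical.arbitrary β)) with hf
    apply Set.ncard_le_ncard_of_injOn f ?_ ?_ (ntset_finite R S sim θ)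
    · rintro c ⟨-, hq⟩
      obtain ⟨hrR, s, hsS, hsim, hmk⟩ := hq.choose_spec
      rw [hf]; simp only [dif_pos hq]
      exact ⟨hq.choose, hrR, s, hsS, hsim, rfl⟩
    · rintro c1 ⟨-, hq1⟩ c2 ⟨-, hq2⟩ hfe
      obtain ⟨hr1, s1, hs1, hsim1, hmk1⟩ := hq1.choose_spec
      obtain ⟨hr2, s2, hs2, hsim2, hmk2⟩ := hq2.choose_spec
      rw [hf] at hfe; simp only [dif_pos hq1, dif_pos hq2] at hfe
      have e1 : G.connectedComponentMk (Sum.inl hq1.choose)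
          = G.connectedComponentMk (Sum.inr s1) :=
        mk_eq_of_edge R S sim hr1 hs1 (h.trans hsim1)
      have e2 : G.connectedComponentMk (Sum.inl hq2.choose)
          = G.connectedComponentMk (Sum.inr s2) :=
        mk_eq_of_edge R S sim hr2 hs2 (h.trans hsim2)
      have := mk_mono (biGraph_mono R S sim h) hfe
      rw [← hmk1, ← hmk2, ← e1, ← e2, this]
  have hB2 : (A \ A1).ncard ≤ (S \ coverS R S sim θ).card := by
    set g : G.ConnectedComponent → β :=
      fun c => if hq : ∃ s, s ∈ S ∧ ∃ r ∈ R, θ'' ≤ sim r s ∧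
          G.connectedComponentMk (Sum.inr s) = c then hq.choose
        else Classical.arbitrary β with hg
    rw [← Set.ncard_coe_finset]
    apply Set.ncard_le_ncard_of_injOn g ?_ ?_ (Finset.finite_toSet _)
    · rintro c ⟨hcA, hcn⟩
      obtain ⟨r, hrR, s, hsS, hsim, hmk⟩ := hcA
      have hq : ∃ s, s ∈ S ∧ ∃ r ∈ R, θ'' ≤ sim r s ∧
          G.connectedComponentMk (Sum.inr s) = c :=
        ⟨s, hsS, r, hrR, hsim, by
          rw [← (mk_eq_of_edge R S sim hrR hsS hsim : G.connectedComponentMk _ = _)]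
          exact hmk⟩
      obtain ⟨hsS', r', hr'R, hsim', hmk'⟩ := hq.choose_spec
      rw [hg]; simp only [dif_pos hq]
      simp only [Finset.coe_sdiff, Set.mem_diff, Finset.mem_coe]
      refine ⟨hsS', fun hcov => ?_⟩
      obtain ⟨-, r'', hr''R, hsim''⟩ := Finset.mem_filter.mp hcov
      exact hcn ⟨⟨r, hrR, s, hsS, hsim, hmk⟩, ⟨r'', hr''R, hq.choose, hsS', hsim'', hmk'⟩⟩
    · rintro c1 ⟨hc1, -⟩ c2 ⟨hc2, -⟩ hge
      obtain ⟨r1, hr1, s1, hs1, hsim1, hmk1⟩ := hc1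
      obtain ⟨r2, hr2, s2, hs2, hsim2, hmk2⟩ := hc2
      have hq1 : ∃ s, s ∈ S ∧ ∃ r ∈ R, θ'' ≤ sim r s ∧
          G.connectedComponentMk (Sum.inr s) = c1 :=
        ⟨s1, hs1, r1, hr1, hsim1, by
          rw [← (mk_eq_of_edge R S sim hr1 hs1 hsim1 : G.connectedComponentMk _ = _)]
          exact hmk1⟩
      have hq2 : ∃ s, s ∈ S ∧ ∃ r ∈ R, θ'' ≤ sim r s ∧
          G.connectedComponentMk (Sum.inr s) = c2 :=
        ⟨s2, hs2, r2, hr2, hsim2, by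
          rw [← (mk_eq_of_edge R S sim hr2 hs2 hsim2 : G.connectedComponentMk _ = _)]
          exact hmk2⟩
      rw [hg] at hge; simp only [dif_pos hq1, dif_pos hq2] at hge
      have h1 := hq1.choose_spec.2.choose_spec.2.2
      have h2 := hq2.choose_spec.2.choose_spec.2.2
      rw [← h1, ← h2, hge]
  omega

end aux

theorem maxgroups_upper_bound {α β : Type*} (R : Finset α) (S : Finset β)
    (sim : α → β → ℝ) (θ θ'' : ℝ) (h : θ'' < θ) :
    hc R S sim θ'' ≤ hc R S sim θ +
      min (R \ coverR R S sim θ).card (S \ coverS R S sim θ).card := by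
  rcases le_total (R \ coverR R S sim θ).card (S \ coverS R S sim θ).card with h' | h'
  · rw [min_eq_left h']; exact hc_bound_R R S sim h.le
  · rw [min_eq_right h']; exact hc_bound_S R S sim h.le
end

section
/- For any threshold θ'' < θ, the outer-join preference score satisfies h_o(θ'') ≤ h_o(θ) + min{|R \ cover^R(θ)|, |S \ cover^S(θ)|}, where h_o(θ) = |cover^R(θ)| + |cover^S(θ)| − |join(θ)|. -/
open scoped Classical

/-! Newly covered elements of `S` are witnessed by pairs newly in the join, so
`|cover^S(θ'') \ cover^S(θ)| ≤ |join(θ'') \ join(θ)|`; the newly covered elements of `R` lie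
in `R \ cover^R(θ)`. Hence `h_o(θ'') - h_o(θ) ≤ |R \ cover^R(θ)|`, and symmetrically. -/

lemma Finset.card_image_sdiff_image_le {γ δ : Type*} [DecidableEq γ] [DecidableEq δ]
    (f : γ → δ) (s t : Finset γ) : (s.image f \ t.image f).card ≤ (s \ t).card := by
  calc (s.image f \ t.image f).card ≤ ((s \ t).image f).card := by
        refine Finset.card_le_card fun y hy => ?_
        obtain ⟨⟨x, hx, rfl⟩, hy⟩ := by simpa only [Finset.mem_sdiff, Finset.mem_image] using hy
        exact Finset.mem_image_of_mem f (Finset.mem_sdiff.mpr ⟨hx, fun hxt => hy ⟨x, hxt, rfl⟩⟩)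
    _ ≤ (s \ t).card := Finset.card_image_le

section

variable {α β : Type*} (R : Finset α) (S : Finset β) (sim : α → β → ℝ)

lemma simJoin_antitone : Antitone (simJoin R S sim) :=
  fun _ _ hle _ hp => by
    simp only [simJoin, Finset.mem_filter] at hp ⊢
    exact ⟨hp.1, hle.trans hp.2⟩

lemma coverR_eq_image_fst (θ : ℝ) : coverR R S sim θ = (simJoin R S sim θ).image Prod.fst := by
  ext r
  simp [coverR, simJoin, and_assoc]

lemma coverS_eq_image_snd (θ : ℝ) : coverS R S sim θ = (simJoin R S sim θ).image Prod.snd := by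
  ext s
  simp only [coverS, simJoin, Finset.mem_filter, Finset.mem_image, Finset.mem_product]
  exact ⟨fun ⟨hs, r, hr, hθ⟩ => ⟨(r, s), ⟨⟨hr, hs⟩, hθ⟩, rfl⟩,
    fun ⟨(r, _), ⟨⟨hr, hs⟩, hθ⟩, hrs⟩ => hrs ▸ ⟨hs, r, hr, hθ⟩⟩

lemma coverR_antitone : Antitone (coverR R S sim) := fun _ _ hle => by
  simpa only [coverR_eq_image_fst] using Finset.image_subset_image (simJoin_antitone R S sim hle)

lemma coverS_antitone : Antitone (coverS R S sim) := fun _ _ hle => by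
  simpa only [coverS_eq_image_snd] using Finset.image_subset_image (simJoin_antitone R S sim hle)

lemma ho_eq_add_card_sdiff {θ θ'' : ℝ} (hle : θ'' ≤ θ) :
    ho R S sim θ'' = ho R S sim θ + (coverR R S sim θ'' \ coverR R S sim θ).card
      + (coverS R S sim θ'' \ coverS R S sim θ).card
      - (simJoin R S sim θ'' \ simJoin R S sim θ).card := by
  have hJ := Finset.card_sdiff_add_card_eq_card (simJoin_antitone R S sim hle)
  have hR := Finset.card_sdiff_add_card_eq_card (coverR_antitone R S sim hle)
  have hS := Finset.card_sdiff_add_card_eq_card (coverS_antitone R S sim hle)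
  unfold ho
  omega

lemma card_coverR_sdiff_le_card_simJoin_sdiff (θ θ'' : ℝ) :
    (coverR R S sim θ'' \ coverR R S sim θ).card
      ≤ (simJoin R S sim θ'' \ simJoin R S sim θ).card := by
  simpa only [coverR_eq_image_fst] using Finset.card_image_sdiff_image_le Prod.fst _ _

lemma card_coverS_sdiff_le_card_simJoin_sdiff (θ θ'' : ℝ) :
    (coverS R S sim θ'' \ coverS R S sim θ).card
      ≤ (simJoin R S sim θ'' \ simJoin R S sim θ).card := by
  simpa only [coverS_eq_image_snd] using Finset.card_image_sdiff_image_le Prod.snd _ _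

lemma card_coverR_sdiff_le (θ θ'' : ℝ) :
    (coverR R S sim θ'' \ coverR R S sim θ).card ≤ (R \ coverR R S sim θ).card :=
  Finset.card_le_card (Finset.sdiff_subset_sdiff (Finset.filter_subset _ _) le_rfl)

lemma card_coverS_sdiff_le (θ θ'' : ℝ) :
    (coverS R S sim θ'' \ coverS R S sim θ).card ≤ (S \ coverS R S sim θ).card :=
  Finset.card_le_card (Finset.sdiff_subset_sdiff (Finset.filter_subset _ _) le_rfl)

lemma ho_le_add_card_sdiff_coverR {θ θ'' : ℝ} (hle : θ'' ≤ θ) :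
    ho R S sim θ'' ≤ ho R S sim θ + (R \ coverR R S sim θ).card := by
  rw [ho_eq_add_card_sdiff R S sim hle]
  have := card_coverR_sdiff_le R S sim θ θ''
  have := card_coverS_sdiff_le_card_simJoin_sdiff R S sim θ θ''
  omega

lemma ho_le_add_card_sdiff_coverS {θ θ'' : ℝ} (hle : θ'' ≤ θ) :
    ho R S sim θ'' ≤ ho R S sim θ + (S \ coverS R S sim θ).card := by
  rw [ho_eq_add_card_sdiff R S sim hle]
  have := card_coverS_sdiff_le R S sim θ θ''
  have := card_coverR_sdiff_le_card_simJoin_sdiff R S sim θ θ''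
  omega

end

theorem minoutjoin_upper_bound {α β : Type*} (R : Finset α) (S : Finset β)
    (sim : α → β → ℝ) (θ θ'' : ℝ) (h : θ'' < θ) :
    ho R S sim θ'' ≤ ho R S sim θ +
      min ((R \ coverR R S sim θ).card : ℤ) ((S \ coverS R S sim θ).card : ℤ) := by
  rw [← min_add_add_left]
  exact le_min (ho_le_add_card_sdiff_coverR R S sim h.le) (ho_le_add_card_sdiff_coverS R S sim h.le)
end

section
/- Prefix filtering for Jaccard similarity: for finite multisets r, s and threshold θ ∈ (0,1], if jaccard(r,s) = |r ∩ s| / (|r| + |s| − |r ∩ s|) ≥ θ, then |r ∩ s| ≥ ⌈θ · |r|⌉. -/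
open scoped Classical

theorem jaccard_overlap_threshold {α : Type*} (r s : Finset α) (θ : ℝ)
    (hθ0 : 0 < θ) (hθ1 : θ ≤ 1)
    (h : θ ≤ ((r ∩ s).card : ℝ) / ((r.card : ℝ) + (s.card : ℝ) - ((r ∩ s).card : ℝ))) :
    ⌈θ * (r.card : ℝ)⌉ ≤ ((r ∩ s).card : ℤ) := by
  set c : ℝ := ((r ∩ s).card : ℝ) with hc
  have hcr : c ≤ (r.card : ℝ) := by
    rw [hc]; exact_mod_cast Finset.card_le_card (Finset.inter_subset_left (s₁ := r) (s₂ := s))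
  have hcs : c ≤ (s.card : ℝ) := by
    rw [hc]; exact_mod_cast Finset.card_le_card (Finset.inter_subset_right (s₁ := r) (s₂ := s))
  have hden : 0 < (r.card : ℝ) + (s.card : ℝ) - c := by
    by_contra hle
    push_neg at hle
    have hden0 : (r.card : ℝ) + (s.card : ℝ) - c = 0 := le_antisymm hle (by linarith)
    rw [hden0, div_zero] at h
    linarith
  have key : θ * ((r.card : ℝ) + (s.card : ℝ) - c) ≤ c := by
    have := (le_div_iff₀ hden).mp h
    linarith
  have h1 : θ * (r.card : ℝ) ≤ c := by nlinarith
  have := Int.ceil_le.mpr (by exact_mod_cast h1 : θ * (r.card : ℝ) ≤ (((r ∩ s).card : ℤ) : ℝ))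
  exact this
end

section
/- Prefix filtering overlap-threshold correctness: if |r ∩ s| ≥ t for an integer t ≥ 1, then the prefixes of length |r| − t + 1 and |s| − t + 1 intersect, i.e., r[:|r| − t + 1] ∩ s[:|s| − t + 1] ≠ ∅, where prefixes are taken with respect to a common linear order on elements. -/
/-!
The least common element `m` of `r` and `s` has at most `|r| - |r ∩ s| ≤ |r| - t` elements of `r`
below it, since none of those lies in `r ∩ s`; so it is among the `|r| - t + 1` smallest elements
of `r`, and likewise of `s`.
-/

open scoped Classical

/-- `r[:k]`: the set of the `k` smallest elements of `r` under the linear order. -/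
noncomputable def prefixSet {α : Type*} [LinearOrder α] (r : Finset α) (k : ℕ) : Finset α :=
  ((r.sort (· ≤ ·)).take k).toFinset

open Finset

section

variable {α : Type*} [LinearOrder α]

lemma mem_prefixSet_of_card_filter_lt {r : Finset α} {k : ℕ} {x : α} (hx : x ∈ r)
    (hk : #{y ∈ r | y < x} < k) : x ∈ prefixSet r k := by
  set l := r.sort (· ≤ ·)
  by_contra hxk
  have hx_drop : x ∈ l.drop k := by
    have hxl : x ∈ l.take k ++ l.drop k := by rw [List.take_append_drop]; exact (mem_sort _).2 hx
    exact (List.mem_append.1 hxl).resolve_left fun h => hxk (List.mem_toFinset.2 h)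
  have h_lt : ∀ y ∈ l.take k, y < x := by
    have hl : (l.take k ++ l.drop k).Pairwise (· < ·) := by
      rw [List.take_append_drop]; exact (sortedLT_sort r).pairwise
    exact fun y hy => (List.pairwise_append.1 hl).2.2 y hy x hx_drop
  have h_len : (l.take k).length = k := by
    have : k < l.length := by
      by_contra! hkl; simp [List.drop_eq_nil_of_le hkl] at hx_drop
    simp [this.le]
  have h_sub : (l.take k).toFinset ⊆ {y ∈ r | y < x} := fun y hy => by
    rw [List.mem_toFinset] at hy
    exact mem_filter.2 ⟨(mem_sort _).1 (List.mem_of_mem_take hy), h_lt y hy⟩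
  have h_card := card_le_card h_sub
  rw [List.toFinset_card_of_nodup ((sort_nodup r _).sublist (List.take_sublist _ _)), h_len] at h_card
  omega

lemma min'_mem_prefixSet {u w : Finset α} (hwu : w ⊆ u) (hw : w.Nonempty) {k : ℕ}
    (hk : #u - #w < k) : w.min' hw ∈ prefixSet u k := by
  refine mem_prefixSet_of_card_filter_lt (hwu (w.min'_mem hw)) (lt_of_le_of_lt ?_ hk)
  have h_sub : {y ∈ u | y < w.min' hw} ⊆ u \ w := fun y hy => by
    rw [mem_filter] at hy
    exact mem_sdiff.2 ⟨hy.1, fun hyw => (w.min'_le y hyw).not_gt hy.2⟩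
  simpa [card_sdiff_of_subset hwu] using card_le_card h_sub

end

theorem prefix_filtering_correct {α : Type*} [LinearOrder α]
    (r s : Finset α) (t : ℕ) (ht : 1 ≤ t) (h : t ≤ (r ∩ s).card) :
    (prefixSet r (r.card - t + 1) ∩ prefixSet s (s.card - t + 1)).Nonempty := by
  have hne : (r ∩ s).Nonempty := card_pos.1 (by omega)
  refine ⟨(r ∩ s).min' hne, mem_inter.2 ⟨min'_mem_prefixSet inter_subset_left hne ?_,
    min'_mem_prefixSet inter_subset_right hne ?_⟩⟩ <;> omega
end

section
/- Prefix filtering for cosine similarity: for finite sets r, s and threshold θ ∈ (0,1], if cosine(r,s) = |r ∩ s| / sqrt(|r| · |s|) ≥ θ, then |r ∩ s| ≥ ⌈θ² · |r|⌉. -/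
open scoped Classical

theorem cosine_overlap_threshold {α : Type*} (r s : Finset α)
    (hr : r.Nonempty) (hs : s.Nonempty) (θ : ℝ) (hθ0 : 0 < θ) (hθ1 : θ ≤ 1)
    (h : θ ≤ ((r ∩ s).card : ℝ) / Real.sqrt ((r.card : ℝ) * (s.card : ℝ))) :
    ⌈θ ^ 2 * (r.card : ℝ)⌉ ≤ ((r ∩ s).card : ℤ) := by
  set c : ℝ := ((r ∩ s).card : ℝ) with hc
  have hrpos : (0:ℝ) < r.card := by exact_mod_cast hr.card_pos
  have hspos : (0:ℝ) < s.card := by exact_mod_cast hs.card_pos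
  have hprod : (0:ℝ) < (r.card : ℝ) * (s.card : ℝ) := mul_pos hrpos hspos
  have hsqrt : (0:ℝ) < Real.sqrt ((r.card : ℝ) * (s.card : ℝ)) := Real.sqrt_pos.mpr hprod
  have hθs : θ * Real.sqrt ((r.card : ℝ) * (s.card : ℝ)) ≤ c := by
    rw [← le_div_iff₀ hsqrt] at *; exact h
  have hcpos : 0 < c := lt_of_lt_of_le (mul_pos hθ0 hsqrt) hθs
  have hsq : θ^2 * ((r.card : ℝ) * (s.card : ℝ)) ≤ c^2 := by
    have := mul_le_mul hθs hθs (le_of_lt (mul_pos hθ0 hsqrt)) hcpos.le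
    calc θ^2 * ((r.card : ℝ) * (s.card : ℝ))
        = (θ * Real.sqrt _) * (θ * Real.sqrt _) := by
          rw [mul_mul_mul_comm, Real.mul_self_sqrt hprod.le]; ring
      _ ≤ c * c := this
      _ = c^2 := (sq c).symm
  have hcs : c ≤ (s.card : ℝ) := by
    rw [hc]; exact_mod_cast Finset.card_le_card (Finset.inter_subset_right (s₁ := r))
  have key : θ^2 * (r.card : ℝ) ≤ c := by
    have h1 : θ^2 * (r.card : ℝ) * c ≤ c^2 := by
      calc θ^2 * (r.card : ℝ) * c ≤ θ^2 * (r.card : ℝ) * (s.card : ℝ) := by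
            apply mul_le_mul_of_nonneg_left hcs
            positivity
        _ = θ^2 * ((r.card : ℝ) * (s.card : ℝ)) := by ring
        _ ≤ c^2 := hsq
    nlinarith
  exact Int.ceil_le.mpr (by exact_mod_cast key)
end
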